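/- arXiv:1708.05075 — 2 statements merged into one kernel-verified Lean document; each statement's English description precedes it below -/
import Mathlib

section
/- For every n with 6≤n≤8 there exists a betweenness structure of order n and co-size 2n−10 that is not isomorphic to 𝒯_{n,i} for any 1≤i≤⌈(n−5)/2⌉. -/
open scoped ENNReal

namespace FMS

/-- An (ordered) triple is collinear if one of its points lies between the other two. -/
def CollinearTriple {X : Type*} (btw : X → X → X → Prop) (x y z : X) : Prop :=
  btw x y z ∨ btw y x z ∨ btw x z y

/-- A finite set of points is collinear if it can be enumerated as a collinear triple. -/
def CollinearSet {X : Type*} (btw : X → X → X → Prop) (T : Finset X) : Prop :=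
  ∃ x y z : X, (T : Set X) = {x, y, z} ∧ CollinearTriple btw x y z

/-- A triangle is a 3-element subset of the ground set that is not collinear. -/
def IsTriangle {X : Type*} (btw : X → X → X → Prop) (T : Finset X) : Prop :=
  T.card = 3 ∧ ¬ CollinearSet btw T

/-- The co-size of a betweenness structure: the number of triangles. -/
noncomputable def coSize {X : Type*} (btw : X → X → X → Prop) : ℕ :=
  Set.ncard {T : Finset X | IsTriangle btw T}

/-- The degree of a point: the number of triangles containing it. -/
noncomputable def degB {X : Type*} (btw : X → X → X → Prop) (x : X) : ℕ :=
  Set.ncard {T : Finset X | IsTriangle btw T ∧ x ∈ T}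

/-- A betweenness structure is linear if every 3-element subset is collinear. -/
def Linear {X : Type*} (btw : X → X → X → Prop) : Prop :=
  ∀ T : Finset X, T.card = 3 → CollinearSet btw T

/-- The axioms (P1)-(P4) of (almost-metrizable) betweenness structures. -/
def IsBtw {X : Type*} (btw : X → X → X → Prop) : Prop :=
  (∀ x z : X, btw x x z) ∧
  (∀ x y z : X, btw x y z → btw z y x) ∧
  (∀ x y z : X, btw x y z → btw y x z → x = y) ∧
  (∀ x y z w : X, btw x y z → btw x w y → btw x w z ∧ btw w y z)

/-- Isomorphism of betweenness structures. -/
def BIso {X Y : Type*} (btwX : X → X → X → Prop) (btwY : Y → Y → Y → Prop) : Prop :=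
  ∃ e : X ≃ Y, ∀ x y z : X, btwX x y z ↔ btwY (e x) (e y) (e z)

/-- The cost (length) of a walk, given edge weights `w` (non-edges have weight `⊤`). -/
noncomputable def walkCost {X : Type*} (w : X → X → ℝ≥0∞) : List X → ℝ≥0∞
  | [] => 0
  | [_] => 0
  | a :: b :: l => w a b + walkCost w (b :: l)

/-- Shortest-path distance for the weighted graph with weight function `w`. -/
noncomputable def spDist {X : Type*} (w : X → X → ℝ≥0∞) (x y : X) : ℝ≥0∞ :=
  ⨅ l ∈ {l : List X | l.head? = some x ∧ l.getLast? = some y}, walkCost w l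

/-- The betweenness structure induced by the weighted graph with weight function `w`:
`y` is between `x` and `z` iff `d(x,y) + d(y,z) = d(x,z)` for the shortest-path metric. -/
def metricBtw {X : Type*} (w : X → X → ℝ≥0∞) (x y z : X) : Prop :=
  spDist w x y + spDist w y z = spDist w x z

/-- The ordered betweenness structure `𝒫ₙ` induced by the path `Pₙ`. -/
def pathBtw (n : ℕ) : Fin n → Fin n → Fin n → Prop := fun i j k =>
  (i ≤ j ∧ j ≤ k) ∨ (k ≤ j ∧ j ≤ i)

/-- Unit edge weights of the 4-cycle `C₄`. -/
noncomputable def wC4 : Fin 4 → Fin 4 → ℝ≥0∞ := fun i j =>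
  if (j : ℕ) = ((i : ℕ) + 1) % 4 ∨ (i : ℕ) = ((j : ℕ) + 1) % 4 then 1 else ⊤

/-- Unit edge weights of the complete graph `K₃`. -/
noncomputable def wK3 : Fin 3 → Fin 3 → ℝ≥0∞ := fun i j => if i ≠ j then 1 else ⊤

/-- A betweenness structure is regular if no 4-element subset induces a substructure
isomorphic to `𝒞₄` (no cyclic line). -/
def Regular {X : Type*} (btw : X → X → X → Prop) : Prop :=
  ∀ Y : Set X, ¬ BIso (fun a b c : Y => btw a.1 b.1 c.1) (metricBtw wC4)

/-- A betweenness structure is orderable if it has an ordered extension: there is an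
ordering (injective labeling by naturals) of the points such that every betweenness
relation is compatible with it. -/
def Orderable {X : Type*} (btw : X → X → X → Prop) : Prop :=
  ∃ f : X → ℕ, Function.Injective f ∧
    ∀ x y z : X, btw x y z → (f x ≤ f y ∧ f y ≤ f z) ∨ (f z ≤ f y ∧ f y ≤ f x)

/-- The triangle hypergraph is a Δ-star: at most one edge, or all pairs of distinct
triangles meet in the same kernel `K`. -/
def DeltaStar {X : Type*} (btw : X → X → X → Prop) : Prop :=
  {T : Finset X | IsTriangle btw T}.Subsingleton ∨
  ∃ K : Set X, ∀ E F : Finset X, IsTriangle btw E → IsTriangle btw F → E ≠ F →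
    (E : Set X) ∩ (F : Set X) = K

/-- The triangle hypergraph is a tight star: at most one edge, or all pairs of distinct
triangles meet in the same 2-element kernel `K`. -/
def TightStar {X : Type*} (btw : X → X → X → Prop) : Prop :=
  {T : Finset X | IsTriangle btw T}.Subsingleton ∨
  ∃ K : Set X, K.ncard = 2 ∧ ∀ E F : Finset X, IsTriangle btw E → IsTriangle btw F → E ≠ F →
    (E : Set X) ∩ (F : Set X) = K

/-- A class of betweenness structures is hereditary if it is closed under isomorphism
and under taking induced substructures. -/
def Hereditary (Φ : ∀ X : Type, (X → X → X → Prop) → Prop) : Prop :=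
  (∀ (X Y : Type) (bX : X → X → X → Prop) (bY : Y → Y → Y → Prop),
      BIso bX bY → Φ X bX → Φ Y bY) ∧
  (∀ (X : Type) (bX : X → X → X → Prop) (Y : Set X), Y.Nonempty →
      Φ X bX → Φ Y (fun a b c : Y => bX a.1 b.1 c.1))

/-! Weight functions of the graphs `Q`, `R`, `S`, `T`.
In each of the following, the vertex `Sum.inl a : Fin m ⊕ Bool` is the point
`x_{a+1}` (so `x₁,…,x_m` with `m = n - 2` are `Sum.inl 0, …, Sum.inl (m-1)`),
`Sum.inr false` is `y` and `Sum.inr true` is `z`. The parameter `i` is 1-based,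
as in the paper. Non-edges have weight `⊤`. -/

/-- `Q²ₙ` with `m = n - 2`: path plus edges `{y,x₁}, {z,x₁}, {y,z}`. -/
noncomputable def wQ2 (m : ℕ) : Fin m ⊕ Bool → Fin m ⊕ Bool → ℝ≥0∞
  | Sum.inl a, Sum.inl b => if (a : ℕ) + 1 = (b : ℕ) ∨ (b : ℕ) + 1 = (a : ℕ) then 1 else ⊤
  | Sum.inl a, Sum.inr _ => if (a : ℕ) = 0 then 1 else ⊤
  | Sum.inr _, Sum.inl b => if (b : ℕ) = 0 then 1 else ⊤
  | Sum.inr c, Sum.inr d => if c ≠ d then 1 else ⊤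

/-- `Q³ₙ` with `m = n - 2`: path plus edges `{y,x₁}, {z,x₁}`. -/
noncomputable def wQ3 (m : ℕ) : Fin m ⊕ Bool → Fin m ⊕ Bool → ℝ≥0∞
  | Sum.inl a, Sum.inl b => if (a : ℕ) + 1 = (b : ℕ) ∨ (b : ℕ) + 1 = (a : ℕ) then 1 else ⊤
  | Sum.inl a, Sum.inr _ => if (a : ℕ) = 0 then 1 else ⊤
  | Sum.inr _, Sum.inl b => if (b : ℕ) = 0 then 1 else ⊤
  | Sum.inr _, Sum.inr _ => ⊤

/-- `R²ₙ,ᵢ` with `m = n - 2`: path with edge `{xᵢ, xᵢ₊₁}` deleted, plus unit edges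
`{y,xᵢ}, {z,xᵢ}, {y,xᵢ₊₁}, {z,xᵢ₊₁}, {y,z}`. -/
noncomputable def wR2 (m i : ℕ) : Fin m ⊕ Bool → Fin m ⊕ Bool → ℝ≥0∞
  | Sum.inl a, Sum.inl b =>
      if ((a : ℕ) + 1 = (b : ℕ) ∧ (a : ℕ) + 1 ≠ i) ∨
         ((b : ℕ) + 1 = (a : ℕ) ∧ (b : ℕ) + 1 ≠ i) then 1 else ⊤
  | Sum.inl a, Sum.inr _ => if (a : ℕ) + 1 = i ∨ (a : ℕ) = i then 1 else ⊤
  | Sum.inr _, Sum.inl b => if (b : ℕ) + 1 = i ∨ (b : ℕ) = i then 1 else ⊤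
  | Sum.inr c, Sum.inr d => if c ≠ d then 1 else ⊤

/-- `R³ₙ,ᵢ` with `m = n - 2`: path with edge `{xᵢ, xᵢ₊₁}` deleted, plus unit edges
`{y,xᵢ}, {z,xᵢ}` and weight-2 edges `{y,xᵢ₊₁}, {z,xᵢ₊₁}`. -/
noncomputable def wR3 (m i : ℕ) : Fin m ⊕ Bool → Fin m ⊕ Bool → ℝ≥0∞
  | Sum.inl a, Sum.inl b =>
      if ((a : ℕ) + 1 = (b : ℕ) ∧ (a : ℕ) + 1 ≠ i) ∨
         ((b : ℕ) + 1 = (a : ℕ) ∧ (b : ℕ) + 1 ≠ i) then 1 else ⊤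
  | Sum.inl a, Sum.inr _ => if (a : ℕ) + 1 = i then 1 else if (a : ℕ) = i then 2 else ⊤
  | Sum.inr _, Sum.inl b => if (b : ℕ) + 1 = i then 1 else if (b : ℕ) = i then 2 else ⊤
  | Sum.inr _, Sum.inr _ => ⊤

/-- `R⁴ₙ,ᵢ` with `m = n - 2`: path with edge `{xᵢ, xᵢ₊₁}` deleted, plus unit edges
`{y,xᵢ}, {z,xᵢ}, {y,xᵢ₊₁}, {z,xᵢ₊₁}`. -/
noncomputable def wR4 (m i : ℕ) : Fin m ⊕ Bool → Fin m ⊕ Bool → ℝ≥0∞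
  | Sum.inl a, Sum.inl b =>
      if ((a : ℕ) + 1 = (b : ℕ) ∧ (a : ℕ) + 1 ≠ i) ∨
         ((b : ℕ) + 1 = (a : ℕ) ∧ (b : ℕ) + 1 ≠ i) then 1 else ⊤
  | Sum.inl a, Sum.inr _ => if (a : ℕ) + 1 = i ∨ (a : ℕ) = i then 1 else ⊤
  | Sum.inr _, Sum.inl b => if (b : ℕ) + 1 = i ∨ (b : ℕ) = i then 1 else ⊤
  | Sum.inr _, Sum.inr _ => ⊤

/-- `S²ₙ` with `m = n - 2`: path plus unit edges `{x₁,y}, {x_m,z}` and an edge `{y,z}`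
of weight `n - 2 = m`. -/
noncomputable def wS2 (m : ℕ) : Fin m ⊕ Bool → Fin m ⊕ Bool → ℝ≥0∞
  | Sum.inl a, Sum.inl b => if (a : ℕ) + 1 = (b : ℕ) ∨ (b : ℕ) + 1 = (a : ℕ) then 1 else ⊤
  | Sum.inl a, Sum.inr c =>
      if (c = false ∧ (a : ℕ) = 0) ∨ (c = true ∧ (a : ℕ) = m - 1) then 1 else ⊤
  | Sum.inr c, Sum.inl b =>
      if (c = false ∧ (b : ℕ) = 0) ∨ (c = true ∧ (b : ℕ) = m - 1) then 1 else ⊤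
  | Sum.inr c, Sum.inr d => if c ≠ d then (m : ℝ≥0∞) else ⊤

/-- `S³ₙ` with `m = n - 2`: path plus a unit edge `{x₁,y}`, a weight-2 edge `{x_m,z}`
and an edge `{y,z}` of weight `n - 2 = m`. -/
noncomputable def wS3 (m : ℕ) : Fin m ⊕ Bool → Fin m ⊕ Bool → ℝ≥0∞
  | Sum.inl a, Sum.inl b => if (a : ℕ) + 1 = (b : ℕ) ∨ (b : ℕ) + 1 = (a : ℕ) then 1 else ⊤
  | Sum.inl a, Sum.inr c =>
      if c = false ∧ (a : ℕ) = 0 then 1 else if c = true ∧ (a : ℕ) = m - 1 then 2 else ⊤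
  | Sum.inr c, Sum.inl b =>
      if c = false ∧ (b : ℕ) = 0 then 1 else if c = true ∧ (b : ℕ) = m - 1 then 2 else ⊤
  | Sum.inr c, Sum.inr d => if c ≠ d then (m : ℝ≥0∞) else ⊤

/-- `S⁴ₙ` with `m = n - 2`: path plus unit edges `{x₁,y}, {x_m,z}` and an edge `{y,z}`
of weight `n - 3 = m - 1`. -/
noncomputable def wS4 (m : ℕ) : Fin m ⊕ Bool → Fin m ⊕ Bool → ℝ≥0∞
  | Sum.inl a, Sum.inl b => if (a : ℕ) + 1 = (b : ℕ) ∨ (b : ℕ) + 1 = (a : ℕ) then 1 else ⊤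
  | Sum.inl a, Sum.inr c =>
      if (c = false ∧ (a : ℕ) = 0) ∨ (c = true ∧ (a : ℕ) = m - 1) then 1 else ⊤
  | Sum.inr c, Sum.inl b =>
      if (c = false ∧ (b : ℕ) = 0) ∨ (c = true ∧ (b : ℕ) = m - 1) then 1 else ⊤
  | Sum.inr c, Sum.inr d => if c ≠ d then ((m - 1 : ℕ) : ℝ≥0∞) else ⊤

/-- `Tₙ,ᵢ` with `m = n - 4`; the vertices `Sum.inl a` are the points `x_{a+1}`, and
`Sum.inr 0, Sum.inr 1, Sum.inr 2, Sum.inr 3` are `y, z, u, v` respectively. All edges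
have unit weight: the path edges `{x_j, x_{j+1}}` (`1 ≤ j ≤ n-5`, `j ≠ i`) together with
`{xᵢ,y}, {xᵢ,z}, {y,u}, {y,v}, {z,u}, {z,v}, {u,xᵢ₊₁}, {v,xᵢ₊₁}`. -/
noncomputable def wT (m i : ℕ) : Fin m ⊕ Fin 4 → Fin m ⊕ Fin 4 → ℝ≥0∞
  | Sum.inl a, Sum.inl b =>
      if ((a : ℕ) + 1 = (b : ℕ) ∧ (a : ℕ) + 1 ≠ i) ∨
         ((b : ℕ) + 1 = (a : ℕ) ∧ (b : ℕ) + 1 ≠ i) then 1 else ⊤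
  | Sum.inl a, Sum.inr c =>
      if ((a : ℕ) + 1 = i ∧ (c : ℕ) ≤ 1) ∨ ((a : ℕ) = i ∧ 2 ≤ (c : ℕ)) then 1 else ⊤
  | Sum.inr c, Sum.inl b =>
      if ((b : ℕ) + 1 = i ∧ (c : ℕ) ≤ 1) ∨ ((b : ℕ) = i ∧ 2 ≤ (c : ℕ)) then 1 else ⊤
  | Sum.inr c, Sum.inr d =>
      if ((c : ℕ) ≤ 1 ∧ 2 ≤ (d : ℕ)) ∨ ((d : ℕ) ≤ 1 ∧ 2 ≤ (c : ℕ)) then 1 else ⊤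

/-!
`Tₙ,ᵢ` is a layered graph: its vertices sit in consecutive layers `x₁, …, xᵢ, {y, z}, {u, v},
xᵢ₊₁, …`, and consecutive layers are completely joined. Its distance is therefore the layer
distance, except that two distinct points of one layer are at distance `2`. When layers have at
most two points, a triple is a triangle exactly when two of its points share a layer and the
third is at layer distance at least `2` from them. Hence every point of `𝒯ₙ,ᵢ` lies in at
most `n - 5` triangles. The witness uses the same distance with a single doubled layer, placed
so that exactly `2n - 10` of the other points are at layer distance at least `2`; its two
doubled points then lie in `2n - 10 ≥ n - 4` triangles, and an isomorphism would preserve this.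
-/

variable {X : Type*}

section ShortestPaths

theorem spDist_le_walkCost (w : X → X → ℝ≥0∞) {x y : X} {l : List X}
    (hx : l.head? = some x) (hy : l.getLast? = some y) :
    spDist w x y ≤ walkCost w l :=
  iInf₂_le l ⟨hx, hy⟩

theorem spDist_self_eq_zero (w : X → X → ℝ≥0∞) (x : X) : spDist w x x = 0 :=
  nonpos_iff_eq_zero.1 (spDist_le_walkCost w (l := [x]) rfl rfl)

theorem spDist_le_add (w : X → X → ℝ≥0∞) (x x' y : X) :
    spDist w x y ≤ w x x' + spDist w x' y := by
  simp only [spDist, ENNReal.add_iInf]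
  refine le_iInf₂ fun l ⟨hx', hy⟩ => ?_
  obtain ⟨a, t, rfl⟩ := List.exists_cons_of_ne_nil (l := l) (by rintro rfl; simp at hx')
  obtain rfl : a = x' := by simpa using hx'
  exact spDist_le_walkCost w (l := x :: a :: t) rfl (by rwa [List.getLast?_cons_cons])

theorem le_spDist {D : X → X → ℕ} (w : X → X → ℝ≥0∞) (hD : ∀ x, D x x = 0)
    (hlip : ∀ x y z, (D x z : ℝ≥0∞) ≤ w x y + D y z) (x y : X) :
    (D x y : ℝ≥0∞) ≤ spDist w x y := by
  suffices ∀ (l : List X) (x : X), l.head? = some x → l.getLast? = some y →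
      (D x y : ℝ≥0∞) ≤ walkCost w l from le_iInf₂ fun l hl => this l x hl.1 hl.2
  intro l
  induction l with
  | nil => simp
  | cons a t ih =>
    rintro x hx hy
    obtain rfl : a = x := by simpa using hx
    cases t with
    | nil =>
      obtain rfl : a = y := by simpa using hy
      simp [hD]
    | cons b t =>
      calc (D a y : ℝ≥0∞) ≤ w a b + D b y := hlip a b y
        _ ≤ w a b + walkCost w (b :: t) :=
          add_le_add_right (ih b rfl (by rwa [List.getLast?_cons_cons] at hy)) _

theorem spDist_le {D : X → X → ℕ} (w : X → X → ℝ≥0∞) (hD : ∀ x, D x x = 0)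
    (hstep : ∀ x y, x ≠ y → ∃ x', w x x' = 1 ∧ D x y = D x' y + 1) (x y : X) :
    spDist w x y ≤ D x y := by
  induction h : D x y generalizing x with
  | zero =>
    by_cases hxy : x = y
    · simp [hxy, spDist_self_eq_zero]
    · obtain ⟨x', -, hD⟩ := hstep x y hxy
      omega
  | succ k ih =>
    obtain ⟨x', hw, hD⟩ := hstep x y (by rintro rfl; simp [hD] at h)
    calc spDist w x y ≤ w x x' + spDist w x' y := spDist_le_add w x x' y
      _ ≤ 1 + k := by rw [hw]; exact add_le_add_right (ih x' (by omega)) 1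
      _ = (k + 1 : ℕ) := by push_cast; ring

end ShortestPaths

abbrev distBtw (D : X → X → ℕ) : X → X → X → Prop := fun x y z => D x y + D y z = D x z

theorem isBtw_distBtw {D : X → X → ℕ} (hD : ∀ x y, D x y = 0 ↔ x = y)
    (hsymm : ∀ x y, D x y = D y x) (htri : ∀ x y z, D x z ≤ D x y + D y z) :
    IsBtw (distBtw D) := by
  refine ⟨fun x z => by simp [(hD x x).2 rfl], fun x y z h => ?_, fun x y z h₁ h₂ => ?_,
    fun x y z w h₁ h₂ => ?_⟩
  · rw [distBtw, hsymm z y, hsymm y x, hsymm z x]; omega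
  · exact (hD x y).1 (by have := hsymm x y; omega)
  · have := htri x w z; have := htri w y z; constructor <;> omega

theorem metricBtw_eq_distBtw {w : X → X → ℝ≥0∞} {D : X → X → ℕ}
    (h : ∀ x y, spDist w x y = D x y) : metricBtw w = distBtw D := by
  ext x y z
  simp only [metricBtw, h]
  norm_cast

section Layered

def layeredWeight (p : X → ℕ) (x y : X) : ℝ≥0∞ := if Nat.dist (p x) (p y) = 1 then 1 else ⊤

variable [DecidableEq X] (p : X → ℕ)

def layeredDist (x y : X) : ℕ :=
  if x = y then 0 else if p x = p y then 2 else Nat.dist (p x) (p y)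

theorem layeredDist_eq_zero_iff (x y : X) : layeredDist p x y = 0 ↔ x = y := by
  unfold layeredDist
  split_ifs with h₁ h₂
  · simpa using h₁
  · simpa using h₁
  · exact ⟨fun h => absurd (Nat.eq_of_dist_eq_zero h) h₂, fun h => absurd h h₁⟩

theorem layeredDist_comm (x y : X) : layeredDist p x y = layeredDist p y x := by
  simp only [layeredDist, eq_comm, Nat.dist_comm]

theorem layeredDist_triangle (x y z : X) :
    layeredDist p x z ≤ layeredDist p x y + layeredDist p y z := by
  unfold layeredDist Nat.dist
  split_ifs <;> subst_vars <;> first | omega | simp_all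

theorem isBtw_distBtw_layeredDist : IsBtw (distBtw (layeredDist p)) :=
  isBtw_distBtw (layeredDist_eq_zero_iff p) (layeredDist_comm p) (layeredDist_triangle p)

theorem layeredDist_le_add_one {x y : X} (hxy : Nat.dist (p x) (p y) = 1) (z : X) :
    layeredDist p x z ≤ layeredDist p y z + 1 := by
  unfold layeredDist Nat.dist at *
  split_ifs <;> subst_vars <;> omega

theorem exists_layeredDist_step {N : ℕ} (hN : 1 ≤ N) (hp : Set.range p = Set.Iic N)
    {x y : X} (hxy : x ≠ y) :
    ∃ x', layeredWeight p x x' = 1 ∧ layeredDist p x y = layeredDist p x' y + 1 := by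
  -- the layer next to `p x` towards `p y` (on either side if they coincide)
  obtain ⟨k, hkN, hk₁, hk⟩ : ∃ k ≤ N, Nat.dist (p x) k = 1 ∧
      (p x ≠ p y → Nat.dist k (p y) + 1 = Nat.dist (p x) (p y)) := by
    have hxN : p x ≤ N := hp.subset ⟨x, rfl⟩
    have hyN : p y ≤ N := hp.subset ⟨y, rfl⟩
    unfold Nat.dist
    rcases lt_trichotomy (p x) (p y) with h | h | h
    · exact ⟨p x + 1, by omega, by omega, by omega⟩
    · by_cases hx : p x < N
      · exact ⟨p x + 1, by omega, by omega, by omega⟩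
      · exact ⟨p x - 1, by omega, by omega, by omega⟩
    · exact ⟨p x - 1, by omega, by omega, by omega⟩
  by_cases hky : k = p y
  · refine ⟨y, by simp [layeredWeight, ← hky, hk₁], ?_⟩
    subst hky
    simp only [layeredDist, hxy, if_false, if_true]
    unfold Nat.dist at *
    split_ifs <;> omega
  · obtain ⟨z, rfl⟩ : ∃ z, p z = k := hp.symm.subset hkN
    have hzy : z ≠ y := by rintro rfl; exact hky rfl
    refine ⟨z, by simp [layeredWeight, hk₁], ?_⟩
    simp only [layeredDist, hxy, hzy, hky, if_false]
    unfold Nat.dist at *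
    split_ifs <;> omega

theorem spDist_layeredWeight {N : ℕ} (hN : 1 ≤ N) (hp : Set.range p = Set.Iic N) (x y : X) :
    spDist (layeredWeight p) x y = layeredDist p x y := by
  have hD (x : X) : layeredDist p x x = 0 := by simp [layeredDist]
  refine le_antisymm (spDist_le _ hD (fun _ _ => exists_layeredDist_step p hN hp) x y)
    (le_spDist _ hD (fun x y z => ?_) x y)
  unfold layeredWeight
  split_ifs with h
  · rw [add_comm]; exact_mod_cast layeredDist_le_add_one p h z
  · simp

end Layered

/-- The layer of each vertex of `Tₙ,ᵢ`: `x₁, …, xᵢ` fill layers `0, …, i - 1`, then come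
`{y, z}`, `{u, v}` and `xᵢ₊₁, …, x_m`. -/
def posT (m i : ℕ) : Fin m ⊕ Fin 4 → ℕ :=
  Sum.elim (fun a => if (a : ℕ) < i then a else a + 2) (fun c => i + c / 2)

theorem wT_eq_layeredWeight (m i : ℕ) : wT m i = layeredWeight (posT m i) := by
  funext a b
  rcases a with a | c <;> rcases b with b | d <;>
    simp only [wT, layeredWeight, posT, Sum.elim_inl, Sum.elim_inr] <;>
    congr 1 <;> apply propext <;> unfold Nat.dist <;> (try split_ifs) <;> omega

theorem range_posT {m i : ℕ} (hi : i ≤ m) : Set.range (posT m i) = Set.Iic (m + 1) := by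
  refine Set.Subset.antisymm ?_ fun k hk => ?_
  · rintro _ ⟨a | c, rfl⟩ <;> simp only [posT, Sum.elim_inl, Sum.elim_inr, Set.mem_Iic] <;>
      (try split_ifs) <;> omega
  · rw [Set.mem_Iic] at hk
    by_cases hki : k < i
    · exact ⟨.inl ⟨k, by omega⟩, by simp [posT, hki]⟩
    by_cases hki' : k ≤ i + 1
    · exact ⟨.inr ⟨2 * (k - i), by omega⟩, by simp only [posT, Sum.elim_inr]; omega⟩
    · exact ⟨.inl ⟨k - 2, by omega⟩, by simp only [posT, Sum.elim_inl]; split_ifs <;> omega⟩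

theorem metricBtw_wT {m i : ℕ} (hi : i ≤ m) :
    metricBtw (wT m i) = distBtw (layeredDist (posT m i)) := by
  rw [wT_eq_layeredWeight]
  exact metricBtw_eq_distBtw (spDist_layeredWeight _ (by omega) (range_posT hi))

section Counting

instance (btw : X → X → X → Prop) [∀ x y z, Decidable (btw x y z)] (x y z : X) :
    Decidable (CollinearTriple btw x y z) :=
  inferInstanceAs (Decidable (_ ∨ _))

variable [DecidableEq X]

theorem collinearSet_iff_exists_mem (btw : X → X → X → Prop) (T : Finset X) :
    CollinearSet btw T ↔
      ∃ x ∈ T, ∃ y ∈ T, ∃ z ∈ T, T = {x, y, z} ∧ CollinearTriple btw x y z := by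
  constructor
  · rintro ⟨x, y, z, hT, hc⟩
    obtain rfl : T = {x, y, z} := Finset.coe_injective (by simpa using hT)
    exact ⟨x, by simp, y, by simp, z, by simp, rfl, hc⟩
  · rintro ⟨x, -, y, -, z, -, rfl, hc⟩
    exact ⟨x, y, z, by simp, hc⟩

instance (btw : X → X → X → Prop) [∀ x y z, Decidable (btw x y z)] (T : Finset X) :
    Decidable (CollinearSet btw T) :=
  decidable_of_iff _ (collinearSet_iff_exists_mem btw T).symm

instance (btw : X → X → X → Prop) [∀ x y z, Decidable (btw x y z)] (T : Finset X) :
    Decidable (IsTriangle btw T) :=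
  inferInstanceAs (Decidable (_ ∧ _))

variable [Fintype X] (btw : X → X → X → Prop) [∀ x y z, Decidable (btw x y z)]

theorem coSize_eq_card : coSize btw = (Finset.univ.filter (IsTriangle btw)).card := by
  rw [coSize, ← Set.ncard_coe_finset, Finset.coe_filter_univ]

theorem degB_eq_card (x : X) :
    degB btw x = (Finset.univ.filter fun T => IsTriangle btw T ∧ x ∈ T).card := by
  rw [degB, ← Set.ncard_coe_finset, Finset.coe_filter_univ]

end Counting

section Isomorphism

variable {Y : Type*} {bX : X → X → X → Prop} {bY : Y → Y → Y → Prop} (e : X ≃ Y)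

theorem CollinearSet.map_equiv (he : ∀ x y z, bX x y z ↔ bY (e x) (e y) (e z))
    {T : Finset X} (hT : CollinearSet bX T) : CollinearSet bY (T.map e.toEmbedding) := by
  obtain ⟨x, y, z, hT, hc⟩ := hT
  refine ⟨e x, e y, e z, by simp [hT, Set.image_insert_eq], ?_⟩
  simpa only [CollinearTriple, he] using hc

theorem isTriangle_map_equiv_iff (he : ∀ x y z, bX x y z ↔ bY (e x) (e y) (e z))
    (T : Finset X) : IsTriangle bY (T.map e.toEmbedding) ↔ IsTriangle bX T := by
  refine and_congr (by simp) (not_congr ⟨fun h => ?_, CollinearSet.map_equiv e he⟩)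
  have he' : ∀ x y z, bY x y z ↔ bX (e.symm x) (e.symm y) (e.symm z) := by simp [he]
  simpa [Finset.map_map] using h.map_equiv e.symm he'

theorem degB_equiv_apply (he : ∀ x y z, bX x y z ↔ bY (e x) (e y) (e z)) (x : X) :
    degB bY (e x) = degB bX x := by
  have : {T | IsTriangle bX T ∧ x ∈ T} =
      Equiv.finsetCongr e ⁻¹' {T | IsTriangle bY T ∧ e x ∈ T} := by
    ext T
    simp [isTriangle_map_equiv_iff e he]
  rw [degB, degB, this,
    Set.ncard_preimage_of_injective_subset_range (Equiv.injective _) (by simp)]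

theorem not_bIso_of_degB_lt (x : X) (h : ∀ y, degB bY y < degB bX x) : ¬ BIso bX bY := by
  rintro ⟨e, he⟩
  exact (h (e x)).ne (degB_equiv_apply e he x)

end Isomorphism

/-- for `6 ≤ n ≤ 8` there is a betweenness structure of order `n` and
co-size `2n - 10` not isomorphic to any `𝒯ₙ,ᵢ` (`1 ≤ i ≤ ⌈(n-5)/2⌉`). -/
theorem stmt12 (n : ℕ) (h6 : 6 ≤ n) (h8 : n ≤ 8) :
    ∃ btw : Fin n → Fin n → Fin n → Prop,
      IsBtw btw ∧ coSize btw = 2 * n - 10 ∧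
      ∀ i : ℕ, 1 ≤ i → i ≤ (n - 4) / 2 → ¬ BIso btw (metricBtw (wT (n - 4) i)) := by
  obtain ⟨p, hcoSize, x, hdeg⟩ : ∃ p : Fin n → ℕ,
      coSize (distBtw (layeredDist p)) = 2 * n - 10 ∧
        ∃ x, n - 4 ≤ degB (distBtw (layeredDist p)) x := by
    simp only [coSize_eq_card, degB_eq_card]
    interval_cases n
    · exact ⟨![1, 1, 0, 2, 3, 4], by decide, 0, by decide⟩
    · exact ⟨![0, 0, 1, 2, 3, 4, 5], by decide, 0, by decide⟩
    · exact ⟨![0, 0, 2, 3, 4, 5, 6, 7], by decide, 0, by decide⟩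
  refine ⟨distBtw (layeredDist p), isBtw_distBtw_layeredDist p, hcoSize, fun i hi hin => ?_⟩
  refine not_bIso_of_degB_lt x fun v => lt_of_lt_of_le ?_ hdeg
  rw [metricBtw_wT (by omega), degB_eq_card]
  interval_cases n <;> interval_cases i <;> revert v <;> decide

end FMS
end

section
/- Let c be an integer and Φ a hereditary class of betweenness structures such that for every n'≥3, every nonlinear betweenness structure of order n' belonging to Φ has co-size at least n'−c. Let n>c and let B be a nonlinear betweenness structure of order n and co-size n−c belonging to Φ. Then the triangle hypergraph H(B) is a Δ-star; moreover, if n>2c−1, then H(B) is a tight star. -/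
open scoped ENNReal

namespace FMS

lemma collinear_map {X : Type} (btw : X → X → X → Prop) (Y : Set X) (T : Finset Y) :
    CollinearSet (fun a b c : Y => btw a.1 b.1 c.1) T ↔
      CollinearSet btw (T.map (Function.Embedding.subtype (· ∈ Y))) := by
  constructor
  · rintro ⟨a, b, c, hT, hcol⟩
    refine ⟨a.1, b.1, c.1, ?_, hcol⟩
    rw [Finset.coe_map, hT]
    simp [Set.image_insert_eq]
  · rintro ⟨p, q, r, hT, hcol⟩
    rw [Finset.coe_map] at hT
    simp only [Function.Embedding.coe_subtype] at hT
    have hp : p ∈ Subtype.val '' (T : Set Y) := by rw [hT]; simp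
    have hq : q ∈ Subtype.val '' (T : Set Y) := by rw [hT]; simp
    have hr : r ∈ Subtype.val '' (T : Set Y) := by rw [hT]; simp
    obtain ⟨a, _, ha⟩ := hp
    obtain ⟨b, _, hb⟩ := hq
    obtain ⟨c, _, hc⟩ := hr
    refine ⟨a, b, c, ?_, ?_⟩
    · apply Set.image_injective.mpr Subtype.val_injective
      rw [hT, ← ha, ← hb, ← hc]
      simp only [Set.image_insert_eq, Set.image_singleton]
    · subst ha hb hc; exact hcol

lemma isTriangle_map {X : Type} (btw : X → X → X → Prop) (Y : Set X) (T : Finset Y) :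
    IsTriangle (fun a b c : Y => btw a.1 b.1 c.1) T ↔
      IsTriangle btw (T.map (Function.Embedding.subtype (· ∈ Y))) := by
  unfold IsTriangle
  rw [Finset.card_map, collinear_map]

lemma coSize_split {X : Type} [Fintype X] (btw : X → X → X → Prop) (p : X) :
    coSize btw = degB btw p +
      coSize (fun a b c : ({p}ᶜ : Set X) => btw a.1 b.1 c.1) := by
  classical
  set Y : Set X := {p}ᶜ with hY
  have himg : {T : Finset X | IsTriangle btw T ∧ p ∉ T} =
      (fun T : Finset Y => T.map (Function.Embedding.subtype (· ∈ Y))) ''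
        {T : Finset Y | IsTriangle (fun a b c : Y => btw a.1 b.1 c.1) T} := by
    ext S
    constructor
    · rintro ⟨hS, hp⟩
      have hfil : S.filter (· ∈ Y) = S :=
        Finset.filter_true_of_mem (fun q hq => by
          simp only [hY, Set.mem_compl_iff, Set.mem_singleton_iff]
          rintro rfl; exact hp hq)
      refine ⟨S.subtype (· ∈ Y), ?_, ?_⟩
      · rw [Set.mem_setOf_eq, isTriangle_map, Finset.subtype_map, hfil]; exact hS
      · show (S.subtype (· ∈ Y)).map (Function.Embedding.subtype (· ∈ Y)) = S
        rw [Finset.subtype_map, hfil]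
    · rintro ⟨T, hT, rfl⟩
      rw [Set.mem_setOf_eq, isTriangle_map] at hT
      refine ⟨hT, ?_⟩
      intro hmem
      rw [Finset.mem_map] at hmem
      obtain ⟨a, _, ha⟩ := hmem
      simp only [Function.Embedding.coe_subtype] at ha
      have := a.2
      rw [ha] at this
      simp [hY] at this
  have hsplit : {T : Finset X | IsTriangle btw T} =
      {T | IsTriangle btw T ∧ p ∈ T} ∪ {T | IsTriangle btw T ∧ p ∉ T} := by
    ext T; by_cases h : p ∈ T <;> simp [h]
  have hdisj : Disjoint {T : Finset X | IsTriangle btw T ∧ p ∈ T}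
      {T : Finset X | IsTriangle btw T ∧ p ∉ T} := by
    rw [Set.disjoint_left]; rintro T ⟨_, h⟩ ⟨_, h'⟩; exact h' h
  rw [coSize, hsplit, Set.ncard_union_eq hdisj (Set.toFinite _) (Set.toFinite _)]
  congr 1
  rw [himg, Set.ncard_image_of_injective _ (Finset.map_injective _)]
  rfl

/-- let `Φ` be hereditary with `τ_Φ(n',0) ≥ n' - c` for all `n' ≥ 3`, and
let `B ∈ Φ` be nonlinear of order `n > c` and co-size `n - c`. Then the triangle
hypergraph of `B` is a Δ-star, and a tight star whenever `n > 2c - 1`. -/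
theorem stmt16 (Φ : ∀ X : Type, (X → X → X → Prop) → Prop) (hΦ : Hereditary Φ) (c : ℤ)
    (hmin : ∀ (X : Type) [Fintype X] (btw : X → X → X → Prop),
        IsBtw btw → 3 ≤ Fintype.card X → Φ X btw → ¬ Linear btw →
        (Fintype.card X : ℤ) - c ≤ (coSize btw : ℤ))
    {X : Type} [Fintype X] {n : ℕ} (hcard : Fintype.card X = n) (hn : c < (n : ℤ))
    (btw : X → X → X → Prop) (hB : IsBtw btw) (hΦB : Φ X btw) (hnl : ¬ Linear btw)
    (hcs : (coSize btw : ℤ) = (n : ℤ) - c) :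
    DeltaStar btw ∧ (2 * c - 1 < (n : ℤ) → TightStar btw) := by
  classical
  -- Degree lemma: a point missed by some triangle lies in at most one triangle.
  have degle : ∀ p : X, (∃ G : Finset X, IsTriangle btw G ∧ p ∉ G) → degB btw p ≤ 1 := by
    rintro p ⟨G, hG, hpG⟩
    set Y : Set X := {p}ᶜ with hYdef
    set btw' : Y → Y → Y → Prop := fun a b c => btw a.1 b.1 c.1 with hbtw'
    have h4 : 4 ≤ n := by
      have h := Finset.card_le_univ (insert p G)
      rw [Finset.card_insert_of_notMem hpG, hG.1, hcard] at h
      exact h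
    have hYcard : Fintype.card Y = n - 1 := by
      rw [← Nat.card_eq_fintype_card, Nat.card_coe_set_eq]
      rw [show Y = Set.univ \ {p} from by ext q; simp [hYdef]]
      rw [Set.ncard_diff (Set.subset_univ {p}), Set.ncard_univ, Set.ncard_singleton,
        Nat.card_eq_fintype_card, hcard]
    have hYne : Y.Nonempty := by
      obtain ⟨q, hq⟩ := Finset.card_pos.mp (by rw [hG.1]; norm_num)
      exact ⟨q, by simp only [hYdef, Set.mem_compl_iff, Set.mem_singleton_iff]
                   rintro rfl; exact hpG hq⟩
    have hΦ' : Φ Y btw' := hΦ.2 X btw Y hYne hΦB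
    have hB' : IsBtw btw' := by
      obtain ⟨h1, h2, h3, h4'⟩ := hB
      exact ⟨fun x z => h1 _ _, fun x y z h => h2 _ _ _ h,
        fun x y z ha hb => Subtype.ext (h3 _ _ _ ha hb),
        fun x y z w ha hb => h4' _ _ _ _ ha hb⟩
    have hfil : G.filter (· ∈ Y) = G :=
      Finset.filter_true_of_mem (fun q hq => by
        simp only [hYdef, Set.mem_compl_iff, Set.mem_singleton_iff]
        rintro rfl; exact hpG hq)
    have hmapG : (G.subtype (· ∈ Y)).map (Function.Embedding.subtype (· ∈ Y)) = G := by
      rw [Finset.subtype_map, hfil]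
    have hGtri' : IsTriangle btw' (G.subtype (· ∈ Y)) := by
      rw [hbtw', isTriangle_map, hmapG]; exact hG
    have hnl' : ¬ Linear btw' := by
      intro hlin
      exact hGtri'.2 (hlin _ hGtri'.1)
    have hlow := hmin Y btw' hB' (by omega) hΦ' hnl'
    have hspl := coSize_split btw p
    rw [hYcard] at hlow
    have : (coSize btw : ℤ) = (degB btw p : ℤ) + (coSize btw' : ℤ) := by
      rw [hspl]; push_cast; ring
    omega
  by_cases hss : {T : Finset X | IsTriangle btw T}.Subsingleton
  · exact ⟨Or.inl hss, fun _ => Or.inl hss⟩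
  rw [Set.not_subsingleton_iff] at hss
  obtain ⟨E, hE, F, hF, hEF⟩ := hss
  rw [Set.mem_setOf_eq] at hE hF
  set K : Set X := {p | ∀ T : Finset X, IsTriangle btw T → p ∈ T} with hKdef
  have hK : ∀ E' F' : Finset X, IsTriangle btw E' → IsTriangle btw F' → E' ≠ F' →
      (E' : Set X) ∩ (F' : Set X) = K := by
    intro E' F' hE' hF' hne
    apply Set.Subset.antisymm
    · rintro p ⟨hpE, hpF⟩ T hT
      by_contra hpT
      have h1 : degB btw p ≤ 1 := degle p ⟨T, hT, hpT⟩
      have h2 : 2 ≤ degB btw p := by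
        have hsub : ({E', F'} : Set (Finset X)) ⊆ {T | IsTriangle btw T ∧ p ∈ T} := by
          rintro S hS
          rcases hS with rfl | rfl
          · exact ⟨hE', hpE⟩
          · exact ⟨hF', hpF⟩
        calc 2 = ({E', F'} : Set (Finset X)).ncard := (Set.ncard_pair hne).symm
          _ ≤ _ := Set.ncard_le_ncard hsub (Set.toFinite _)
      omega
    · intro p hp
      exact ⟨hp E' hE', hp F' hF'⟩
  refine ⟨Or.inr ⟨K, hK⟩, fun hn2 => Or.inr ?_⟩
  -- Tight star: counting argument
  set 𝒯 : Finset (Finset X) := Finset.univ.filter (IsTriangle btw) with h𝒯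
  have hmem : ∀ T : Finset X, T ∈ 𝒯 ↔ IsTriangle btw T := by
    intro T; simp [h𝒯]
  have hcount : coSize btw = 𝒯.card := by
    rw [coSize, show {T : Finset X | IsTriangle btw T} = ↑𝒯 from by ext T; simp [hmem],
      Set.ncard_coe_finset]
  set KF : Finset X := E ∩ F with hKF
  have hKcoe : (KF : Set X) = K := by
    rw [hKF, Finset.coe_inter]; exact hK E F hE hF hEF
  have hksub : ∀ T ∈ 𝒯, KF ⊆ T := by
    intro T hT q hq
    rw [hmem] at hT
    have : q ∈ K := by rw [← hKcoe]; exact hq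
    exact this T hT
  have hkcard : KF.card ≤ 2 := by
    have hss : KF ⊂ E := by
      refine ⟨Finset.inter_subset_left, fun h => hEF ?_⟩
      have hEsubF : E ⊆ F := fun q hq => Finset.mem_of_mem_inter_right (h hq)
      exact Finset.eq_of_subset_of_card_le hEsubF (by rw [hE.1, hF.1])
    have := Finset.card_lt_card hss
    rw [hE.1] at this; omega
  have hinter : ∀ T ∈ 𝒯, ∀ T' ∈ 𝒯, T ≠ T' → T ∩ T' = KF := by
    intro T hT T' hT' hne
    apply Finset.coe_injective
    rw [Finset.coe_inter, hKcoe]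
    exact hK T T' ((hmem T).mp hT) ((hmem T').mp hT') hne
  have hdisjU : ∀ T ∈ 𝒯, ∀ T' ∈ 𝒯, T ≠ T' → Disjoint (T \ KF) (T' \ KF) := by
    intro T hT T' hT' hne
    rw [Finset.disjoint_left]
    intro q hq hq'
    rw [Finset.mem_sdiff] at hq hq'
    have : q ∈ T ∩ T' := Finset.mem_inter.mpr ⟨hq.1, hq'.1⟩
    rw [hinter T hT T' hT' hne] at this
    exact hq.2 this
  set U : Finset X := 𝒯.biUnion (fun T => T \ KF) with hU
  have hUcard : U.card = 𝒯.card * (3 - KF.card) := by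
    rw [hU, Finset.card_biUnion hdisjU]
    rw [Finset.sum_congr rfl (fun T hT => by
      rw [Finset.card_sdiff_of_subset (hksub T hT), ((hmem T).mp hT).1])]
    rw [Finset.sum_const, smul_eq_mul]
  have hUK : Disjoint U KF := by
    rw [Finset.disjoint_left]
    intro q hq
    rw [hU, Finset.mem_biUnion] at hq
    obtain ⟨T, _, hT⟩ := hq
    exact (Finset.mem_sdiff.mp hT).2
  have hbound : U.card + KF.card ≤ n := by
    rw [← Finset.card_union_of_disjoint hUK]
    calc (U ∪ KF).card ≤ Finset.univ.card := Finset.card_le_univ _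
      _ = n := by rw [Finset.card_univ, hcard]
  have ht2 : 2 ≤ 𝒯.card := by
    exact Finset.one_lt_card.mpr ⟨E, (hmem E).mpr hE, F, (hmem F).mpr hF, hEF⟩
  have htn : (𝒯.card : ℤ) = (n : ℤ) - c := by rw [← hcount]; exact hcs
  have hkeq : KF.card = 2 := by
    rw [hUcard] at hbound
    interval_cases h : KF.card
    · exfalso
      simp only [Nat.sub_zero] at hbound
      omega
    · exfalso
      omega
    · rfl
  refine ⟨K, ?_, hK⟩
  rw [← hKcoe, Set.ncard_coe_finset, hkeq]

end FMS
end
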